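/- arXiv:2105.12619 — 4 statements merged into one kernel-verified Lean document; each statement's English description precedes it below -/
import Mathlib

section
/- There exist constants C₁ > 0 and C₂ > 0 such that for every α ∈ (0,1) and every s ≥ 0 one has G_α(s) ≥ C₁ · B_α(s)^(2−q) · L_q(s + e) − C₂, where e is Euler's number. -/
/-!
Write `1 / S_α(σ) = (σ + 1) / (χ σ) · B_α(σ)^(-q)`. Since `B_α` is increasing and
`B_α(s) ≤ 2 B_α(σ)` for `σ ∈ [s/2, s]`, the integrand is at least a constant times
`B_α(s)^(-q) / χ` on `[s/2, s]` whatever the sign of `q`; integrating twice gives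
`G_α(s) ≳ s² B_α(s)^(-q) ≥ B_α(s)^(2-q)`, as `B_α(s) ≤ s + 1`.
For `q = 1` the integrand is at least `1 / (χ σ)`, so `G_α(s) ≥ (s log s - s + 1) / χ`, which
dominates `(s + 1) log (s + e) ≥ B_α(s) log (s + e)`. Since `G_α ≥ 0`, bounded ranges of `s`
only cost the constant `C₂`.
-/

open Real Set intervalIntegral
open MeasureTheory (volume)

noncomputable def iteratedIntegral (f : ℝ → ℝ) (s : ℝ) : ℝ :=
  ∫ ρ in (1:ℝ)..s, ∫ σ in (1:ℝ)..ρ, f σ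

lemma iteratedIntegral_nonneg {f : ℝ → ℝ} (hf : ∀ x, 0 ≤ x → 0 ≤ f x) {s : ℝ} (hs : 0 ≤ s) :
    0 ≤ iteratedIntegral f s := by
  rcases le_total 1 s with h1s | hs1
  · exact integral_nonneg h1s fun ρ hρ =>
      integral_nonneg hρ.1 fun σ hσ => hf σ (by linarith [hρ.1, hσ.1])
  · -- both integrals run backwards and the sign changes cancel; no integrability is needed,
    -- which matters since `1 / S_α` is not integrable at `0`
    rw [iteratedIntegral, integral_symm, ← integral_neg]
    refine integral_nonneg hs1 fun ρ hρ => ?_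
    rw [integral_symm, neg_neg]
    exact integral_nonneg hρ.2 fun σ hσ => hf σ (by linarith [hρ.1, hσ.1])

lemma intervalIntegrable_primitive {f : ℝ → ℝ} {s : ℝ} (hs : 1 ≤ s)
    (hf : ContinuousOn f (Icc 1 s)) :
    IntervalIntegrable (fun ρ => ∫ σ in (1:ℝ)..ρ, f σ) volume 1 s :=
  (continuousOn_primitive_interval' (hf.intervalIntegrable_of_Icc hs)
    left_mem_uIcc).intervalIntegrable

lemma iteratedIntegral_mono_on {f g : ℝ → ℝ} {s : ℝ} (hs : 1 ≤ s)
    (hf : ContinuousOn f (Icc 1 s)) (hg : ContinuousOn g (Icc 1 s))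
    (hfg : ∀ x ∈ Icc 1 s, f x ≤ g x) :
    iteratedIntegral f s ≤ iteratedIntegral g s := by
  refine integral_mono_on hs (intervalIntegrable_primitive hs hf)
    (intervalIntegrable_primitive hs hg) fun ρ hρ => ?_
  have hsub : Icc 1 ρ ⊆ Icc 1 s := Icc_subset_Icc le_rfl hρ.2
  exact integral_mono_on hρ.1 ((hf.mono hsub).intervalIntegrable_of_Icc hρ.1)
    ((hg.mono hsub).intervalIntegrable_of_Icc hρ.1) fun x hx => hfg x (hsub hx)

lemma integral_le_integral_of_nonneg_of_le_on {g h : ℝ → ℝ} {a b c : ℝ} (hab : a ≤ b)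
    (hbc : b ≤ c) (hh : IntervalIntegrable h volume a c) (hg : IntervalIntegrable g volume b c)
    (hh0 : ∀ x ∈ Icc a b, 0 ≤ h x) (hgh : ∀ x ∈ Icc b c, g x ≤ h x) :
    ∫ x in b..c, g x ≤ ∫ x in a..c, h x := by
  have hac : a ≤ c := hab.trans hbc
  have h₁ : IntervalIntegrable h volume a b :=
    hh.mono_set (by rw [uIcc_of_le hab, uIcc_of_le hac]; exact Icc_subset_Icc le_rfl hbc)
  have h₂ : IntervalIntegrable h volume b c :=
    hh.mono_set (by rw [uIcc_of_le hbc, uIcc_of_le hac]; exact Icc_subset_Icc hab le_rfl)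
  rw [← integral_add_adjacent_intervals h₁ h₂]
  linarith [integral_nonneg (μ := volume) hab hh0, integral_mono_on hbc hg h₂ hgh]

lemma mul_sq_le_iteratedIntegral {f : ℝ → ℝ} {a s m : ℝ} (h1a : 1 ≤ a) (has : a ≤ s)
    (hf : ContinuousOn f (Icc 1 s)) (hf0 : ∀ x ∈ Icc 1 a, 0 ≤ f x)
    (hfm : ∀ x ∈ Icc a s, m ≤ f x) :
    m * (s - a) ^ 2 / 2 ≤ iteratedIntegral f s := by
  have hlin : ∀ ρ ∈ Icc a s, m * (ρ - a) ≤ ∫ σ in (1:ℝ)..ρ, f σ := fun ρ hρ => by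
    have hfi : IntervalIntegrable f volume 1 ρ :=
      (hf.mono (Icc_subset_Icc le_rfl hρ.2)).intervalIntegrable_of_Icc (h1a.trans hρ.1)
    simpa [mul_comm] using integral_le_integral_of_nonneg_of_le_on h1a hρ.1 hfi
      intervalIntegrable_const hf0 fun x hx => hfm x ⟨hx.1, hx.2.trans hρ.2⟩
  have hF0 : ∀ ρ ∈ Icc 1 a, 0 ≤ ∫ σ in (1:ℝ)..ρ, f σ := fun ρ hρ =>
    integral_nonneg hρ.1 fun σ hσ => hf0 σ ⟨hσ.1, hσ.2.trans hρ.2⟩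
  calc m * (s - a) ^ 2 / 2 = ∫ ρ in a..s, m * (ρ - a) := by
        rw [integral_const_mul, integral_comp_sub_right (fun x => x), integral_id]; ring
    _ ≤ iteratedIntegral f s :=
        integral_le_integral_of_nonneg_of_le_on h1a has
          (intervalIntegrable_primitive (h1a.trans has) hf)
          (Continuous.intervalIntegrable (by fun_prop) _ _) hF0 hlin

lemma Real.min_two_rpow_mul_rpow_neg_le {x y : ℝ} (q : ℝ) (hx : 0 < x) (hxy : x ≤ y)
    (hyx : y ≤ 2 * x) : min (2 ^ q) 1 * y ^ (-q) ≤ x ^ (-q) := by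
  have hy : 0 < y := hx.trans_le hxy
  rcases le_total 0 q with hq | hq
  · calc min (2 ^ q) 1 * y ^ (-q) ≤ 1 * y ^ (-q) := by gcongr; exact min_le_right _ _
      _ ≤ x ^ (-q) := by rw [one_mul]; exact rpow_le_rpow_of_nonpos hx hxy (by linarith)
  · calc min (2 ^ q) 1 * y ^ (-q) ≤ 2 ^ q * y ^ (-q) := by gcongr; exact min_le_left _ _
      _ = (y / 2) ^ (-q) := by
        rw [div_rpow hy.le zero_le_two, rpow_neg zero_le_two]; field_simp
      _ ≤ x ^ (-q) := rpow_le_rpow (by positivity) (by linarith) (by linarith)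

lemma Real.add_one_mul_log_add_exp_one_le {s : ℝ} (hs : 8 ≤ s) :
    (s + 1) * log (s + exp 1) ≤ 8 * (s * log s - s + 1) := by
  have hlog8 : log 8 = 3 * log 2 := by
    rw [show (8:ℝ) = 2 ^ 3 by norm_num, log_pow]; norm_num
  have hlogs : 2 ≤ log s := by
    linarith [log_le_log (by norm_num) hs, log_two_gt_d9]
  have hlog_add : log (s + exp 1) ≤ 2 * log s := by
    rw [← log_rpow (by linarith), rpow_two]
    exact log_le_log (by positivity) (by nlinarith [exp_one_lt_d9])
  nlinarith [log_le_sub_one_of_pos (by linarith : (0:ℝ) < s)]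

namespace Chemotaxis

noncomputable def S (χ q α s : ℝ) : ℝ := χ * s * (s + 1) ^ (q - 1) / (1 + α * (s + 1)) ^ q

noncomputable def B (α s : ℝ) : ℝ := (s + 1) / (1 + α * (s + 1))

variable {χ q α : ℝ}

lemma B_pos (hα : 0 ≤ α) {s : ℝ} (hs : -1 < s) : 0 < B α s := by
  have : 0 < s + 1 := by linarith
  unfold B; positivity

lemma B_le_add_one (hα : 0 ≤ α) {s : ℝ} (hs : -1 < s) : B α s ≤ s + 1 :=
  div_le_self (by linarith) (by nlinarith)

lemma B_le_B (hα : 0 ≤ α) {σ s : ℝ} (hσ : -1 < σ) (hσs : σ ≤ s) : B α σ ≤ B α s := by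
  rw [B, B, div_le_div_iff₀ (by nlinarith) (by nlinarith)]
  nlinarith

lemma B_le_two_mul_B (hα : 0 ≤ α) {σ s : ℝ} (hσ : -1 < σ) (hσs : σ ≤ s)
    (hs : s + 1 ≤ 2 * (σ + 1)) : B α s ≤ 2 * B α σ := by
  have hs' : 0 ≤ s + 1 := by linarith
  rw [B, B, mul_div_assoc', div_le_div_iff₀ (by nlinarith) (by nlinarith)]
  nlinarith [mul_nonneg (mul_nonneg hα hs') (by linarith : (0:ℝ) ≤ σ + 1)]

lemma one_div_S_nonneg (hχ : 0 ≤ χ) (hα : 0 ≤ α) {σ : ℝ} (hσ : 0 ≤ σ) :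
    0 ≤ 1 / S χ q α σ := by
  unfold S; positivity

lemma continuousOn_one_div_S (hχ : 0 < χ) (hα : 0 ≤ α) :
    ContinuousOn (fun σ => 1 / S χ q α σ) (Ioi 0) := by
  intro σ (hσ : 0 < σ)
  have h₁ : 0 < σ + 1 := by linarith
  have h₂ : 0 < 1 + α * (σ + 1) := by positivity
  have hS : ContinuousAt (S χ q α) σ := by
    refine ContinuousAt.div ?_ ?_ (by positivity)
    · exact (continuousAt_id.const_mul χ).mul
        ((continuousAt_id.add continuousAt_const).rpow_const (Or.inl h₁.ne'))
    · exact (continuousAt_const.add (continuousAt_const.mul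
        (continuousAt_id.add continuousAt_const))).rpow_const (Or.inl h₂.ne')
  exact (continuousAt_const.div hS (by unfold S; positivity)).continuousWithinAt

lemma one_div_S_eq (hχ : χ ≠ 0) (hα : 0 ≤ α) {σ : ℝ} (hσ : 0 < σ) :
    1 / S χ q α σ = (σ + 1) / (χ * σ) * B α σ ^ (-q) := by
  have h₁ : 0 < σ + 1 := by linarith
  have h₂ : 0 < 1 + α * (σ + 1) := by positivity
  rw [S, B, rpow_neg (by positivity), div_rpow h₁.le h₂.le, rpow_sub_one h₁.ne']
  field_simp

lemma B_rpow_neg_div_le_one_div_S (hχ : 0 < χ) (hα : 0 ≤ α) {σ : ℝ} (hσ : 0 < σ) :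
    B α σ ^ (-q) / χ ≤ 1 / S χ q α σ := by
  rw [one_div_S_eq hχ.ne' hα hσ, div_eq_inv_mul, ← one_div]
  refine mul_le_mul_of_nonneg_right ?_ (rpow_pos_of_pos (B_pos hα (by linarith)) _).le
  rw [div_le_div_iff₀ hχ (by positivity)]
  nlinarith

lemma one_div_mul_le_one_div_S_one (hχ : 0 < χ) (hα : 0 ≤ α) {σ : ℝ} (hσ : 0 < σ) :
    1 / (χ * σ) ≤ 1 / S χ 1 α σ := by
  rw [S, sub_self, rpow_zero, rpow_one, mul_one]
  exact one_div_le_one_div_of_le (by positivity) (div_le_self (by positivity) (by nlinarith))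

lemma mul_B_rpow_le_iteratedIntegral (hχ : 0 < χ) (hα : 0 ≤ α) {s : ℝ} (hs : 2 ≤ s) :
    min (2 ^ q) 1 / (18 * χ) * B α s ^ (2 - q) ≤
      iteratedIntegral (fun σ => 1 / S χ q α σ) s := by
  have hBs := B_pos hα (s := s) (by linarith)
  set m := min (2 ^ q) 1 * B α s ^ (-q) / χ with hm_def
  have hm0 : 0 ≤ m := by positivity
  have hm : ∀ σ ∈ Icc (s / 2) s, m ≤ 1 / S χ q α σ := by
    intro σ ⟨hσ₁, hσ₂⟩
    have hσ : 0 < σ := by linarith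
    calc m ≤ B α σ ^ (-q) / χ := by
          rw [hm_def]
          gcongr
          exact min_two_rpow_mul_rpow_neg_le q (B_pos hα (by linarith))
            (B_le_B hα (by linarith) hσ₂) (B_le_two_mul_B hα (by linarith) hσ₂ (by linarith))
      _ ≤ 1 / S χ q α σ := B_rpow_neg_div_le_one_div_S hχ hα hσ
  have hG := mul_sq_le_iteratedIntegral (by linarith) (by linarith)
    ((continuousOn_one_div_S hχ hα).mono fun x hx => (by linarith [hx.1] : (0:ℝ) < x))
    (fun x hx => one_div_S_nonneg hχ.le hα (by linarith [hx.1])) hm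
  have hB : B α s ^ 2 / 18 ≤ (s - s / 2) ^ 2 / 2 := by
    nlinarith [B_le_add_one hα (s := s) (by linarith)]
  calc min (2 ^ q) 1 / (18 * χ) * B α s ^ (2 - q) = m * (B α s ^ 2 / 18) := by
        rw [sub_eq_add_neg, rpow_add hBs, rpow_two]; ring
    _ ≤ m * ((s - s / 2) ^ 2 / 2) := mul_le_mul_of_nonneg_left hB hm0
    _ ≤ _ := by linarith

lemma mul_B_rpow_sub_le_iteratedIntegral (hχ : 0 < χ) (hα : 0 ≤ α) (hq : q ≤ 2) {s : ℝ}
    (hs : 0 ≤ s) :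
    min (2 ^ q) 1 / (18 * χ) * B α s ^ (2 - q) - min (2 ^ q) 1 / (18 * χ) * 3 ^ (2 - q) ≤
      iteratedIntegral (fun σ => 1 / S χ q α σ) s := by
  rcases le_total 2 s with h2s | hs2
  · have : 0 ≤ min (2 ^ q) 1 / (18 * χ) * 3 ^ (2 - q) := by positivity
    linarith [mul_B_rpow_le_iteratedIntegral (q := q) hχ hα h2s]
  · have hB : B α s ^ (2 - q) ≤ 3 ^ (2 - q) :=
      rpow_le_rpow (B_pos hα (by linarith)).le
        (by linarith [B_le_add_one hα (s := s) (by linarith)]) (by linarith)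
    have : min (2 ^ q) 1 / (18 * χ) * B α s ^ (2 - q) ≤
        min (2 ^ q) 1 / (18 * χ) * 3 ^ (2 - q) := by gcongr
    linarith [iteratedIntegral_nonneg (fun σ hσ => one_div_S_nonneg (q := q) hχ.le hα hσ) hs]

lemma B_mul_log_le_iteratedIntegral (hχ : 0 < χ) (hα : 0 ≤ α) {s : ℝ} (hs : 8 ≤ s) :
    1 / (8 * χ) * B α s * log (s + exp 1) ≤
      iteratedIntegral (fun σ => 1 / S χ 1 α σ) s := by
  have hs1 : 1 ≤ s := by linarith
  have hpos : ∀ x ∈ Icc 1 s, (0:ℝ) < x := fun x hx => by linarith [hx.1]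
  have hcmp := iteratedIntegral_mono_on (f := fun σ => 1 / (χ * σ)) hs1
    (continuousOn_const.div (continuousOn_const.mul continuousOn_id)
      fun x hx => (mul_pos hχ (hpos x hx)).ne')
    ((continuousOn_one_div_S hχ hα).mono hpos)
    fun x hx => one_div_mul_le_one_div_S_one hχ hα (hpos x hx)
  have hlog : iteratedIntegral (fun σ => 1 / (χ * σ)) s = (s * log s - s + 1) / χ := by
    rw [iteratedIntegral, integral_congr (g := fun ρ => log ρ / χ), integral_div, integral_log]
    · simp
    intro ρ hρ
    rw [uIcc_of_le hs1] at hρ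
    simp only [one_div, mul_inv, integral_const_mul, integral_inv_of_pos one_pos (hpos ρ hρ),
      div_one]
    ring
  have hlog0 : 0 ≤ log (s + exp 1) := log_nonneg (by linarith [add_one_le_exp 1])
  calc 1 / (8 * χ) * B α s * log (s + exp 1)
      ≤ 1 / (8 * χ) * ((s + 1) * log (s + exp 1)) := by
        rw [mul_assoc]; gcongr; exact B_le_add_one hα (by linarith)
    _ ≤ 1 / (8 * χ) * (8 * (s * log s - s + 1)) :=
        mul_le_mul_of_nonneg_left (add_one_mul_log_add_exp_one_le hs) (by positivity)
    _ = iteratedIntegral (fun σ => 1 / (χ * σ)) s := by rw [hlog]; field_simp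
    _ ≤ _ := hcmp

lemma B_mul_log_sub_le_iteratedIntegral (hχ : 0 < χ) (hα : 0 ≤ α) {s : ℝ} (hs : 0 ≤ s) :
    1 / (8 * χ) * B α s * log (s + exp 1) - 90 / (8 * χ) ≤
      iteratedIntegral (fun σ => 1 / S χ 1 α σ) s := by
  rcases le_total 8 s with h8s | hs8
  · have : 0 ≤ 90 / (8 * χ) := by positivity
    linarith [B_mul_log_le_iteratedIntegral hχ hα h8s]
  · have hlog0 : 0 ≤ log (s + exp 1) := log_nonneg (by linarith [add_one_le_exp 1])
    have hlog : log (s + exp 1) ≤ 10 := by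
      linarith [log_le_sub_one_of_pos (by positivity : 0 < s + exp 1), exp_one_lt_d9]
    have hB : B α s ≤ 9 := by linarith [B_le_add_one hα (s := s) (by linarith)]
    have hBlog : B α s * log (s + exp 1) ≤ 90 := by
      nlinarith [B_pos hα (s := s) (by linarith)]
    have : 1 / (8 * χ) * B α s * log (s + exp 1) ≤ 90 / (8 * χ) := by
      rw [mul_assoc, one_div_mul_eq_div]; gcongr
    linarith [iteratedIntegral_nonneg (fun σ hσ => one_div_S_nonneg (q := 1) hχ.le hα hσ) hs]

end Chemotaxis

open Chemotaxis

theorem stmt1 (χ q : ℝ) (hχ : 0 < χ) (hq : q ≤ 1) :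
    ∃ C₁ > (0:ℝ), ∃ C₂ > (0:ℝ), ∀ α ∈ Set.Ioo (0:ℝ) 1, ∀ s ≥ (0:ℝ),
      (∫ ρ in (1:ℝ)..s, ∫ σ in (1:ℝ)..ρ,
          1 / (χ * σ * (σ + 1) ^ (q - 1) / (1 + α * (σ + 1)) ^ q)) ≥
        C₁ * ((s + 1) / (1 + α * (s + 1))) ^ (2 - q) *
          (if q < 1 then 1 else Real.log (s + Real.exp 1)) - C₂ := by
  rcases hq.lt_or_eq with hq1 | rfl
  · refine ⟨min (2 ^ q) 1 / (18 * χ), by positivity, min (2 ^ q) 1 / (18 * χ) * 3 ^ (2 - q),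
      by positivity, fun α hα s hs => ?_⟩
    rw [if_pos hq1, mul_one]
    exact mul_B_rpow_sub_le_iteratedIntegral hχ hα.1.le (by linarith) hs
  · refine ⟨1 / (8 * χ), by positivity, 90 / (8 * χ), by positivity, fun α hα s hs => ?_⟩
    rw [if_neg (lt_irrefl 1), show (2 - 1 : ℝ) = 1 by norm_num, rpow_one]
    exact B_mul_log_sub_le_iteratedIntegral hχ hα.1.le hs
end

section
/- There exists a constant C₂ > 0 such that for every α ∈ (0,1) and every s ≥ 0 one has G_α(s) ≤ C₂ · s^(2−q) · L_q(s) + C₂ · α · s^(3−q) + C₂. -/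
/-!
With `α < 1` and `q ≤ 1`, `1 / S_α σ = (1 + α(σ+1))^q (σ+1)^(1-q) / (χσ)` is at most `2A σ⁻¹` on
`(0, 1]` and at most `A (σ^(-q) + α σ^(1-q))` on `[1, ∞)`, where `A = 2^(2-q)/χ`. For `s ≤ 1` the
double integral is then at most `2A ∫_s^1 (-log ρ) dρ = 2A (1 - s + s log s)`. For `s ≥ 1` it is at
most `s` times the inner integral up to `s`, and `∫_1^s σ^(-q)` is `≤ s^(1-q)/(1-q)` if `q < 1` and
`log s` if `q = 1`; this is where `L_q` comes from.
-/

open Real MeasureTheory Set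

theorem intervalIntegral.integral_mono_on_of_nonneg {f g : ℝ → ℝ} {a b : ℝ} (hab : a ≤ b)
    (hf : ∀ x ∈ Ioc a b, 0 ≤ f x) (hfg : ∀ x ∈ Ioc a b, f x ≤ g x)
    (hg : IntervalIntegrable g volume a b) :
    ∫ x in a..b, f x ≤ ∫ x in a..b, g x := by
  rw [intervalIntegral.integral_of_le hab, intervalIntegral.integral_of_le hab]
  exact integral_mono_of_nonneg ((ae_restrict_iff' measurableSet_Ioc).mpr (ae_of_all _ hf))
    hg.1 ((ae_restrict_iff' measurableSet_Ioc).mpr (ae_of_all _ hfg))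

theorem intervalIntegral.integral_nonneg_of_Ioc {f : ℝ → ℝ} {a b : ℝ} (hab : a ≤ b)
    (hf : ∀ x ∈ Ioc a b, 0 ≤ f x) : 0 ≤ ∫ x in a..b, f x := by
  rw [intervalIntegral.integral_of_le hab]
  exact setIntegral_nonneg measurableSet_Ioc hf

theorem integral_one_rpow_le {p s : ℝ} (hp : -1 < p) :
    ∫ σ in (1:ℝ)..s, σ ^ p ≤ s ^ (p + 1) / (p + 1) := by
  rw [integral_rpow (Or.inl hp), one_rpow]
  gcongr
  · linarith
  · linarith

section IteratedIntegral

variable {f : ℝ → ℝ} {s : ℝ}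

theorem iteratedIntegral_le_of_one_le {g : ℝ → ℝ} (hs : 1 ≤ s) (hf : ∀ σ ∈ Ioc 1 s, 0 ≤ f σ)
    (hfg : ∀ σ ∈ Ioc 1 s, f σ ≤ g σ) (hg : IntervalIntegrable g volume 1 s) :
    ∫ ρ in (1:ℝ)..s, ∫ σ in (1:ℝ)..ρ, f σ ≤ (s - 1) * ∫ σ in (1:ℝ)..s, g σ := by
  have hg0 : ∀ σ ∈ Ioc 1 s, 0 ≤ g σ := fun σ hσ => (hf σ hσ).trans (hfg σ hσ)
  calc ∫ ρ in (1:ℝ)..s, ∫ σ in (1:ℝ)..ρ, f σ ≤ ∫ _ in (1:ℝ)..s, ∫ σ in (1:ℝ)..s, g σ := by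
        refine intervalIntegral.integral_mono_on_of_nonneg hs (fun ρ hρ => ?_) (fun ρ hρ => ?_)
          intervalIntegrable_const
        · exact intervalIntegral.integral_nonneg_of_Ioc hρ.1.le
            fun σ hσ => hf σ ⟨hσ.1, hσ.2.trans hρ.2⟩
        · calc ∫ σ in (1:ℝ)..ρ, f σ ≤ ∫ σ in (1:ℝ)..ρ, g σ :=
                intervalIntegral.integral_mono_on_of_nonneg hρ.1.le
                  (fun σ hσ => hf σ ⟨hσ.1, hσ.2.trans hρ.2⟩)
                  (fun σ hσ => hfg σ ⟨hσ.1, hσ.2.trans hρ.2⟩)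
                  (hg.mono_set (uIcc_subset_uIcc_left (by simp [uIcc_of_le hs, hρ.1.le, hρ.2])))
            _ ≤ ∫ σ in (1:ℝ)..s, g σ := intervalIntegral.integral_mono_interval le_rfl hρ.1.le hρ.2
                ((ae_restrict_iff' measurableSet_Ioc).mpr (ae_of_all _ hg0)) hg
    _ = (s - 1) * ∫ σ in (1:ℝ)..s, g σ := by rw [intervalIntegral.integral_const, smul_eq_mul]

theorem iteratedIntegral_le_of_le_one {c : ℝ} (hs0 : 0 ≤ s) (hs1 : s ≤ 1)
    (hf : ∀ σ ∈ Ioc 0 1, 0 ≤ f σ) (hfc : ∀ σ ∈ Ioc 0 1, f σ ≤ c * σ⁻¹) :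
    ∫ ρ in (1:ℝ)..s, ∫ σ in (1:ℝ)..ρ, f σ ≤ c * (1 - s + s * log s) := by
  have hflip : ∫ ρ in (1:ℝ)..s, ∫ σ in (1:ℝ)..ρ, f σ = ∫ ρ in s..1, ∫ σ in ρ..1, f σ := by
    simp only [intervalIntegral.integral_symm _ (1:ℝ), intervalIntegral.integral_neg, neg_neg]
  have hinner : ∀ ρ ∈ Ioc s 1, ∫ σ in ρ..1, f σ ≤ -c * log ρ := by
    intro ρ hρ
    have hρ0 : 0 < ρ := hs0.trans_lt hρ.1
    have h0 : (0:ℝ) ∉ uIcc ρ 1 := notMem_uIcc_of_lt hρ0 one_pos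
    calc ∫ σ in ρ..1, f σ ≤ ∫ σ in ρ..1, c * σ⁻¹ :=
          intervalIntegral.integral_mono_on_of_nonneg hρ.2
            (fun σ hσ => hf σ ⟨hρ0.trans hσ.1, hσ.2⟩)
            (fun σ hσ => hfc σ ⟨hρ0.trans hσ.1, hσ.2⟩)
            ((intervalIntegrable_inv_iff.mpr (Or.inr h0)).const_mul c)
      _ = -c * log ρ := by
          rw [intervalIntegral.integral_const_mul, integral_inv_of_pos hρ0 one_pos, one_div,
            log_inv, neg_mul, mul_neg]
  rw [hflip]
  calc ∫ ρ in s..1, ∫ σ in ρ..1, f σ ≤ ∫ ρ in s..1, -c * log ρ :=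
        intervalIntegral.integral_mono_on_of_nonneg hs1
          (fun ρ hρ => intervalIntegral.integral_nonneg_of_Ioc hρ.2
            fun σ hσ => hf σ ⟨(hs0.trans_lt hρ.1).trans hσ.1, hσ.2⟩)
          hinner (intervalIntegral.intervalIntegrable_log'.const_mul _)
    _ = c * (1 - s + s * log s) := by
        rw [intervalIntegral.integral_const_mul, integral_log, log_one]
        ring

end IteratedIntegral

noncomputable def S (χ q α σ : ℝ) : ℝ :=
  χ * σ * (σ + 1) ^ (q - 1) / (1 + α * (σ + 1)) ^ q

section InvS

variable {χ q α σ : ℝ}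

theorem one_div_S_eq (hσ : 0 < σ) :
    1 / S χ q α σ = (1 + α * (σ + 1)) ^ q * (σ + 1) ^ (1 - q) / (χ * σ) := by
  rw [S, show 1 - q = -(q - 1) by ring, rpow_neg (by positivity)]
  field_simp

theorem one_div_S_nonneg (hχ : 0 < χ) (hα : 0 ≤ α) (hσ : 0 < σ) : 0 ≤ 1 / S χ q α σ := by
  rw [one_div_S_eq hσ]
  positivity

theorem one_div_S_le (hχ : 0 < χ) (hq : q ≤ 1) (hα : 0 ≤ α) (hσ : 0 < σ) :
    1 / S χ q α σ ≤ (1 + α * (σ + 1)) * (σ + 1) ^ (1 - q) / (χ * σ) := by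
  rw [one_div_S_eq hσ]
  gcongr
  calc (1 + α * (σ + 1)) ^ q ≤ (1 + α * (σ + 1)) ^ (1:ℝ) :=
        rpow_le_rpow_of_exponent_le (by nlinarith) hq
    _ = 1 + α * (σ + 1) := rpow_one _

theorem one_div_S_le_of_one_le (hχ : 0 < χ) (hq : q ≤ 1) (hα : 0 ≤ α) (hσ : 1 ≤ σ) :
    1 / S χ q α σ ≤ 2 ^ (2 - q) / χ * (σ ^ (-q) + α * σ ^ (1 - q)) := by
  have hσ0 : 0 < σ := by linarith
  have h2σ : (σ + 1) ^ (1 - q) ≤ 2 ^ (1 - q) * σ ^ (1 - q) := by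
    rw [← mul_rpow zero_le_two hσ0.le]
    exact rpow_le_rpow (by linarith) (by linarith) (by linarith)
  calc 1 / S χ q α σ ≤ (1 + α * (σ + 1)) * (σ + 1) ^ (1 - q) / (χ * σ) :=
        one_div_S_le hχ hq hα hσ0
    _ ≤ 2 * (1 + α * σ) * (2 ^ (1 - q) * σ ^ (1 - q)) / (χ * σ) := by
        gcongr
        nlinarith
    _ = 2 ^ (2 - q) / χ * (σ ^ (-q) + α * σ ^ (1 - q)) := by
        rw [show (2:ℝ) - q = 1 - q + 1 by ring, rpow_add_one two_ne_zero,
          show 1 - q = -q + 1 by ring, rpow_add_one hσ0.ne']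
        field_simp

theorem one_div_S_le_of_le_one (hχ : 0 < χ) (hq : q ≤ 1) (hα0 : 0 ≤ α) (hα1 : α ≤ 1)
    (hσ0 : 0 < σ) (hσ1 : σ ≤ 1) :
    1 / S χ q α σ ≤ 2 * (2 ^ (2 - q) / χ) * σ⁻¹ := by
  calc 1 / S χ q α σ ≤ (1 + α * (σ + 1)) * (σ + 1) ^ (1 - q) / (χ * σ) :=
        one_div_S_le hχ hq hα0 hσ0
    _ ≤ 4 * 2 ^ (1 - q) / (χ * σ) := by
        gcongr
        · nlinarith
        · linarith
    _ = 2 * (2 ^ (2 - q) / χ) * σ⁻¹ := by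
        rw [show (2:ℝ) - q = 1 - q + 1 by ring, rpow_add_one two_ne_zero]
        field_simp
        ring

end InvS

/-- The factor `L_q(s)` of the estimate. -/
noncomputable def logFactor (q s : ℝ) : ℝ := if q < 1 then 1 else log s

section LogFactor

variable {q s : ℝ}

theorem logFactor_nonneg (hs : 1 ≤ s) : 0 ≤ logFactor q s := by
  unfold logFactor
  split_ifs
  exacts [zero_le_one, log_nonneg hs]

theorem exists_mul_integral_rpow_neg_le (hq : q ≤ 1) :
    ∃ D > 0, ∀ s ≥ 1, s * ∫ σ in (1:ℝ)..s, σ ^ (-q) ≤ D * s ^ (2 - q) * logFactor q s := by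
  rcases hq.lt_or_eq with hq1 | rfl
  · refine ⟨(1 - q)⁻¹, inv_pos.mpr (by linarith), fun s hs => ?_⟩
    have hs0 : 0 < s := by linarith
    calc s * ∫ σ in (1:ℝ)..s, σ ^ (-q) ≤ s * (s ^ (-q + 1) / (-q + 1)) := by
          gcongr
          exact integral_one_rpow_le (by linarith)
      _ = (1 - q)⁻¹ * s ^ (2 - q) * logFactor q s := by
          rw [logFactor, if_pos hq1, neg_add_eq_sub, show (2:ℝ) - q = 1 - q + 1 by ring,
            rpow_add_one hs0.ne']
          ring
  · refine ⟨1, one_pos, fun s hs => ?_⟩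
    have hs0 : 0 < s := by linarith
    rw [logFactor, if_neg (lt_irrefl 1), show (2:ℝ) - 1 = 1 by norm_num, rpow_one, one_mul]
    simp only [rpow_neg_one]
    rw [integral_inv_of_pos one_pos hs0, div_one]

theorem one_sub_add_mul_log_le (hq : q ≤ 1) (hs0 : 0 ≤ s) (hs1 : s ≤ 1) :
    1 - s + s * log s ≤ s ^ (2 - q) * logFactor q s + 1 := by
  rcases hq.lt_or_eq with hq1 | rfl
  · rw [logFactor, if_pos hq1, mul_one]
    have : s * log s ≤ 0 := mul_nonpos_of_nonneg_of_nonpos hs0 (log_nonpos hs0 hs1)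
    have : 0 ≤ s ^ (2 - q) := by positivity
    linarith
  · rw [logFactor, if_neg (lt_irrefl 1), show (2:ℝ) - 1 = 1 by norm_num, rpow_one]
    linarith

theorem neg_one_le_rpow_mul_logFactor (hq : q ≤ 1) (hs0 : 0 ≤ s) (hs1 : s ≤ 1) :
    -1 ≤ s ^ (2 - q) * logFactor q s := by
  rcases hq.lt_or_eq with hq1 | rfl
  · rw [logFactor, if_pos hq1, mul_one]
    linarith [rpow_nonneg hs0 (2 - q)]
  · rw [logFactor, if_neg (lt_irrefl 1), show (2:ℝ) - 1 = 1 by norm_num, rpow_one]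
    rcases hs0.eq_or_lt with rfl | hs0
    · simp
    · have := abs_log_mul_self_lt s hs0 hs1
      rw [abs_lt] at this
      linarith

end LogFactor

section IteratedIntegralInvS

variable {χ q α s : ℝ}

theorem iteratedIntegral_one_div_S_le_of_le_one (hχ : 0 < χ) (hq : q ≤ 1) (hα0 : 0 ≤ α)
    (hα1 : α ≤ 1) (hs0 : 0 ≤ s) (hs1 : s ≤ 1) :
    ∫ ρ in (1:ℝ)..s, ∫ σ in (1:ℝ)..ρ, 1 / S χ q α σ ≤
      2 * (2 ^ (2 - q) / χ) * (1 - s + s * log s) :=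
  iteratedIntegral_le_of_le_one hs0 hs1 (fun _ hσ => one_div_S_nonneg hχ hα0 hσ.1)
    (fun _ hσ => one_div_S_le_of_le_one hχ hq hα0 hα1 hσ.1 hσ.2)

theorem iteratedIntegral_one_div_S_le_of_one_le (hχ : 0 < χ) (hq : q ≤ 1) (hα : 0 ≤ α)
    (hs : 1 ≤ s) :
    ∫ ρ in (1:ℝ)..s, ∫ σ in (1:ℝ)..ρ, 1 / S χ q α σ ≤
      2 ^ (2 - q) / χ * (s * ∫ σ in (1:ℝ)..s, σ ^ (-q)) + 2 ^ (2 - q) / χ * α * s ^ (3 - q) := by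
  set A := 2 ^ (2 - q) / χ
  have hA : 0 < A := by positivity
  have hs0 : 0 < s := by linarith
  have hg1 : IntervalIntegrable (fun σ : ℝ => σ ^ (-q)) volume 1 s :=
    intervalIntegral.intervalIntegrable_rpow (Or.inr (notMem_uIcc_of_lt one_pos (by linarith)))
  have hg2 : IntervalIntegrable (fun σ : ℝ => α * σ ^ (1 - q)) volume 1 s :=
    (intervalIntegral.intervalIntegrable_rpow' (by linarith)).const_mul α
  have hpow : ∀ p : ℝ, 0 ≤ ∫ σ in (1:ℝ)..s, σ ^ p := fun p =>
    intervalIntegral.integral_nonneg_of_Ioc hs fun _ hσ => rpow_nonneg (zero_le_one.trans hσ.1.le) p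
  have hK : ∫ σ in (1:ℝ)..s, σ ^ (1 - q) ≤ s ^ (2 - q) := by
    refine (integral_one_rpow_le (by linarith)).trans ?_
    rw [show 1 - q + 1 = 2 - q by ring]
    exact div_le_self (by positivity) (by linarith)
  calc ∫ ρ in (1:ℝ)..s, ∫ σ in (1:ℝ)..ρ, 1 / S χ q α σ
      ≤ (s - 1) * ∫ σ in (1:ℝ)..s, A * (σ ^ (-q) + α * σ ^ (1 - q)) :=
        iteratedIntegral_le_of_one_le hs
          (fun _ hσ => one_div_S_nonneg hχ hα (zero_lt_one.trans hσ.1))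
          (fun _ hσ => one_div_S_le_of_one_le hχ hq hα hσ.1.le) ((hg1.add hg2).const_mul A)
    _ = (s - 1) * (A * ((∫ σ in (1:ℝ)..s, σ ^ (-q)) + α * ∫ σ in (1:ℝ)..s, σ ^ (1 - q))) := by
        rw [intervalIntegral.integral_const_mul, intervalIntegral.integral_add hg1 hg2,
          intervalIntegral.integral_const_mul]
    _ ≤ s * (A * ((∫ σ in (1:ℝ)..s, σ ^ (-q)) + α * s ^ (2 - q))) := by
        have := hpow (-q)
        have := hpow (1 - q)
        gcongr
        linarith
    _ = A * (s * ∫ σ in (1:ℝ)..s, σ ^ (-q)) + A * α * s ^ (3 - q) := by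
        rw [show (3:ℝ) - q = 2 - q + 1 by ring, rpow_add_one hs0.ne']
        ring

end IteratedIntegralInvS

theorem stmt2 (χ q : ℝ) (hχ : 0 < χ) (hq : q ≤ 1) :
    ∃ C₂ > (0:ℝ), ∀ α ∈ Set.Ioo (0:ℝ) 1, ∀ s ≥ (0:ℝ),
      (∫ ρ in (1:ℝ)..s, ∫ σ in (1:ℝ)..ρ,
          1 / (χ * σ * (σ + 1) ^ (q - 1) / (1 + α * (σ + 1)) ^ q)) ≤
        C₂ * s ^ (2 - q) * (if q < 1 then 1 else Real.log s)
          + C₂ * α * s ^ (3 - q) + C₂ := by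
  obtain ⟨D, hD, hint⟩ := exists_mul_integral_rpow_neg_le hq
  set A := 2 ^ (2 - q) / χ
  have hA : 0 < A := by positivity
  refine ⟨A * (2 + D), by positivity, fun α ⟨hα0, hα1⟩ s hs0 => ?_⟩
  change ∫ ρ in (1:ℝ)..s, ∫ σ in (1:ℝ)..ρ, 1 / S χ q α σ ≤ _ * logFactor q s + _ + _
  have hαs : 0 ≤ A * (2 + D) * α * s ^ (3 - q) := by positivity
  rcases le_total s 1 with hs1 | hs1
  · have hG := iteratedIntegral_one_div_S_le_of_le_one hχ hq hα0.le hα1.le hs0 hs1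
    have hlog := one_sub_add_mul_log_le hq hs0 hs1
    have hlog' := neg_one_le_rpow_mul_logFactor hq hs0 hs1
    nlinarith [mul_le_mul_of_nonneg_left hlog (by positivity : 0 ≤ 2 * A),
      mul_nonneg hA.le (mul_nonneg hD.le (by linarith : 0 ≤ s ^ (2 - q) * logFactor q s + 1))]
  · have hG := iteratedIntegral_one_div_S_le_of_one_le hχ hq hα0.le hs1
    have hL : 0 ≤ s ^ (2 - q) * logFactor q s :=
      mul_nonneg (by positivity) (logFactor_nonneg hs1)
    nlinarith [mul_le_mul_of_nonneg_left (hint s hs1) hA.le, mul_nonneg hA.le hL,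
      mul_nonneg (mul_nonneg hA.le hα0.le) (rpow_nonneg hs0 (3 - q))]
end

section
/- Let χ > 0 and q ≤ 1 be real and let α ∈ (0,1). For every s ≥ 1 one has S_α(s) ≥ (χ/2)·N_α, where N_α := (2/(1+2α))^q if q > 0 and N_α := α^(−q) if q ≤ 0. -/
open Real

theorem stmt8 (χ q : ℝ) (hχ : 0 < χ) (hq : q ≤ 1) (α : ℝ) (hα : α ∈ Set.Ioo (0:ℝ) 1) :
    ∀ s ≥ (1:ℝ),
      χ * s * (s + 1) ^ (q - 1) / (1 + α * (s + 1)) ^ q ≥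
        (χ / 2) * (if 0 < q then (2 / (1 + 2 * α)) ^ q else α ^ (-q)) := by
  obtain ⟨hα0, hα1⟩ := hα
  intro s hs
  have ht : (2:ℝ) ≤ s + 1 := by linarith
  have ht0 : (0:ℝ) < s + 1 := by linarith
  have hd0 : (0:ℝ) < 1 + α * (s + 1) := by nlinarith
  have hp : (0:ℝ) < (s + 1) ^ (q - 1) := Real.rpow_pos_of_pos ht0 _
  have hden : (0:ℝ) < (1 + α * (s + 1)) ^ q := Real.rpow_pos_of_pos hd0 _
  have hmain : (χ / 2) * (s + 1) ^ q ≤ χ * s * (s + 1) ^ (q - 1) := by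
    have h1 : (s + 1) ^ q = (s + 1) ^ (q - 1) * (s + 1) := by
      rw [← Real.rpow_add_one ht0.ne' (q - 1)]; ring_nf
    rw [h1]
    have h2 : χ / 2 * ((s + 1) ^ (q - 1) * (s + 1)) = χ * ((s + 1) / 2) * (s + 1) ^ (q - 1) := by
      ring
    rw [h2]
    have hs2 : (s + 1) / 2 ≤ s := by linarith
    have := mul_pos hχ hp
    nlinarith
  have hq2 : (χ / 2) * (s + 1) ^ q / (1 + α * (s + 1)) ^ q
      = (χ / 2) * ((s + 1) / (1 + α * (s + 1))) ^ q := by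
    rw [Real.div_rpow ht0.le hd0.le]; ring
  have step1 : (χ / 2) * ((s + 1) / (1 + α * (s + 1))) ^ q
      ≤ χ * s * (s + 1) ^ (q - 1) / (1 + α * (s + 1)) ^ q := by
    rw [← hq2]
    gcongr
  have hbase0 : (0:ℝ) < (s + 1) / (1 + α * (s + 1)) := div_pos ht0 hd0
  have step2 : (if 0 < q then (2 / (1 + 2 * α)) ^ q else α ^ (-q))
      ≤ ((s + 1) / (1 + α * (s + 1))) ^ q := by
    split_ifs with hq0
    · -- q > 0: base is ≥ 2/(1+2α)
      apply Real.rpow_le_rpow (by positivity) _ hq0.le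
      rw [div_le_div_iff₀ (by nlinarith) hd0]
      nlinarith
    · -- q ≤ 0: base ≤ 1/α, rpow antitone
      push_neg at hq0
      have h1α : (s + 1) / (1 + α * (s + 1)) ≤ 1 / α := by
        rw [div_le_div_iff₀ hd0 hα0]
        nlinarith
      have := Real.rpow_le_rpow_of_nonpos hbase0 h1α hq0
      calc α ^ (-q) = (1 / α) ^ q := by
              rw [one_div, Real.inv_rpow hα0.le, Real.rpow_neg hα0.le]
        _ ≤ ((s + 1) / (1 + α * (s + 1))) ^ q := this
  calc (χ / 2) * (if 0 < q then (2 / (1 + 2 * α)) ^ q else α ^ (-q))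
      ≤ (χ / 2) * ((s + 1) / (1 + α * (s + 1))) ^ q := by
        apply mul_le_mul_of_nonneg_left step2 (by positivity)
    _ ≤ χ * s * (s + 1) ^ (q - 1) / (1 + α * (s + 1)) ^ q := step1
end

section
/- Let χ > 0 and q ≤ 1 be real and let α ∈ (0,1). Then the function S_α is differentiable at every s ≥ 0, and its derivative satisfies |S_α'(s)| ≤ χ·(1 + |q − 1| + |q|·α)·M_α, where M_α := α^(−q) if q > 0 and M_α := (1+α)^(−q) if q ≤ 0. -/
open Real

theorem stmt11 (χ q : ℝ) (hχ : 0 < χ) (hq : q ≤ 1) (α : ℝ) (hα : α ∈ Set.Ioo (0:ℝ) 1) :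
    ∀ s ≥ (0:ℝ),
      DifferentiableAt ℝ
        (fun t : ℝ => χ * t * (t + 1) ^ (q - 1) / (1 + α * (t + 1)) ^ q) s ∧
      |deriv (fun t : ℝ => χ * t * (t + 1) ^ (q - 1) / (1 + α * (t + 1)) ^ q) s| ≤
        χ * (1 + |q - 1| + |q| * α) * (if 0 < q then α ^ (-q) else (1 + α) ^ (-q)) := by
  obtain ⟨hα0, hα1⟩ := hα
  intro s hs
  have ha0 : (0:ℝ) < s + 1 := by linarith
  have ha1 : (1:ℝ) ≤ s + 1 := by linarith
  have hB0 : (0:ℝ) < 1 + α * (s + 1) := by nlinarith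
  have hB1 : (1:ℝ) ≤ 1 + α * (s + 1) := by nlinarith
  -- derivative of the rewritten function
  have hInner : HasDerivAt (fun t : ℝ => 1 + α * (t + 1)) α s := by
    simpa using (((hasDerivAt_id s).add_const 1).const_mul α).const_add 1
  have hQ : HasDerivAt (fun t : ℝ => (t + 1) ^ (q - 1))
      ((q - 1) * (s + 1) ^ (q - 1 - 1)) s := by
    simpa only [id_eq, one_mul] using
      ((hasDerivAt_id s).add_const 1).rpow_const (Or.inl ha0.ne')
  have hR : HasDerivAt (fun t : ℝ => (1 + α * (t + 1)) ^ (-q))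
      (α * -q * (1 + α * (s + 1)) ^ (-q - 1)) s :=
    hInner.rpow_const (Or.inl hB0.ne')
  have hN : HasDerivAt (fun t : ℝ => χ * t * (t + 1) ^ (q - 1))
      (χ * 1 * (s + 1) ^ (q - 1) + χ * s * ((q - 1) * (s + 1) ^ (q - 1 - 1))) s :=
    ((hasDerivAt_id s).const_mul χ).mul hQ
  have hg : HasDerivAt
      (fun t : ℝ => χ * t * (t + 1) ^ (q - 1) * (1 + α * (t + 1)) ^ (-q))
      ((χ * 1 * (s + 1) ^ (q - 1) + χ * s * ((q - 1) * (s + 1) ^ (q - 1 - 1))) *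
          (1 + α * (s + 1)) ^ (-q) +
        χ * s * (s + 1) ^ (q - 1) * (α * -q * (1 + α * (s + 1)) ^ (-q - 1))) s :=
    hN.mul hR
  have hmem : ∀ᶠ t in nhds s, (0:ℝ) < 1 + α * (t + 1) := by
    have hopen : IsOpen {t : ℝ | 0 < 1 + α * (t + 1)} :=
      isOpen_lt continuous_const (by continuity)
    exact Filter.eventually_of_mem (hopen.mem_nhds hB0) (fun t ht => ht)
  have heq : (fun t : ℝ => χ * t * (t + 1) ^ (q - 1) / (1 + α * (t + 1)) ^ q) =ᶠ[nhds s]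
      (fun t : ℝ => χ * t * (t + 1) ^ (q - 1) * (1 + α * (t + 1)) ^ (-q)) := by
    filter_upwards [hmem] with t ht
    rw [Real.rpow_neg ht.le, div_eq_mul_inv]
  have hf : HasDerivAt
      (fun t : ℝ => χ * t * (t + 1) ^ (q - 1) / (1 + α * (t + 1)) ^ q)
      ((χ * 1 * (s + 1) ^ (q - 1) + χ * s * ((q - 1) * (s + 1) ^ (q - 1 - 1))) *
          (1 + α * (s + 1)) ^ (-q) +
        χ * s * (s + 1) ^ (q - 1) * (α * -q * (1 + α * (s + 1)) ^ (-q - 1))) s :=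
    hg.congr_of_eventuallyEq heq
  refine ⟨hf.differentiableAt, ?_⟩
  rw [hf.deriv]
  set M : ℝ := if 0 < q then α ^ (-q) else (1 + α) ^ (-q) with hMdef
  have hM0 : (0:ℝ) < M := by
    rw [hMdef]; split
    · exact Real.rpow_pos_of_pos hα0 _
    · exact Real.rpow_pos_of_pos (by linarith) _
  have hBq : (1 + α * (s + 1)) ^ (-q) ≤ M * (s + 1) ^ (-q) := by
    rw [hMdef]
    by_cases hqp : 0 < q
    · rw [if_pos hqp]
      have h1 : α * (s + 1) ≤ 1 + α * (s + 1) := by linarith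
      have h2 : (1 + α * (s + 1)) ^ (-q) ≤ (α * (s + 1)) ^ (-q) :=
        Real.rpow_le_rpow_of_nonpos (by positivity) h1 (by linarith)
      rwa [Real.mul_rpow hα0.le ha0.le] at h2
    · rw [if_neg hqp]
      push_neg at hqp
      have h1 : 1 + α * (s + 1) ≤ (1 + α) * (s + 1) := by nlinarith
      have h2 : (1 + α * (s + 1)) ^ (-q) ≤ ((1 + α) * (s + 1)) ^ (-q) :=
        Real.rpow_le_rpow hB0.le h1 (by linarith)
      rwa [Real.mul_rpow (by linarith) ha0.le] at h2
  have hBq1 : (1 + α * (s + 1)) ^ (-q - 1) ≤ M * (s + 1) ^ (-q) := by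
    have e : (1 + α * (s + 1)) ^ (-q - 1)
        = (1 + α * (s + 1)) ^ (-q) * (1 + α * (s + 1)) ^ (-1 : ℝ) := by
      rw [← Real.rpow_add hB0]; ring_nf
    have hle : (1 + α * (s + 1)) ^ (-1 : ℝ) ≤ 1 :=
      Real.rpow_le_one_of_one_le_of_nonpos hB1 (by norm_num)
    calc (1 + α * (s + 1)) ^ (-q - 1)
        ≤ (1 + α * (s + 1)) ^ (-q) * 1 := by
          rw [e]; gcongr
      _ = (1 + α * (s + 1)) ^ (-q) := mul_one _
      _ ≤ M * (s + 1) ^ (-q) := hBq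
  have k1 : (s + 1) ^ (q - 1) * (s + 1) ^ (-q) ≤ 1 := by
    rw [← Real.rpow_add ha0]
    exact Real.rpow_le_one_of_one_le_of_nonpos ha1 (by linarith)
  have k3 : s * ((s + 1) ^ (q - 1) * (s + 1) ^ (-q)) ≤ 1 := by
    have e : (s + 1) ^ (q - 1) * (s + 1) ^ (-q) = (s + 1)⁻¹ := by
      rw [← Real.rpow_add ha0, show q - 1 + -q = -1 by ring, Real.rpow_neg ha0.le,
        Real.rpow_one]
    rw [e]
    rw [← div_eq_mul_inv, div_le_one ha0]; linarith
  have k2 : s * ((s + 1) ^ (q - 1 - 1) * (s + 1) ^ (-q)) ≤ 1 := by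
    have e : (s + 1) ^ (q - 1 - 1) * (s + 1) ^ (-q) = ((s + 1) ^ (2:ℕ) : ℝ)⁻¹ := by
      rw [← Real.rpow_add ha0, show q - 1 - 1 + -q = -2 by ring,
        ← Real.rpow_natCast (s + 1) 2, ← Real.rpow_neg ha0.le]
      norm_num
    rw [e, ← div_eq_mul_inv, div_le_one (by positivity)]
    nlinarith
  have hBqpos : (0:ℝ) ≤ (1 + α * (s + 1)) ^ (-q) := (Real.rpow_pos_of_pos hB0 _).le
  have hapos : (0:ℝ) < (s + 1) ^ (q - 1) := Real.rpow_pos_of_pos ha0 _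
  have hapos2 : (0:ℝ) < (s + 1) ^ (q - 1 - 1) := Real.rpow_pos_of_pos ha0 _
  calc |(χ * 1 * (s + 1) ^ (q - 1) + χ * s * ((q - 1) * (s + 1) ^ (q - 1 - 1))) *
          (1 + α * (s + 1)) ^ (-q) +
        χ * s * (s + 1) ^ (q - 1) * (α * -q * (1 + α * (s + 1)) ^ (-q - 1))|
      ≤ |(χ * 1 * (s + 1) ^ (q - 1) + χ * s * ((q - 1) * (s + 1) ^ (q - 1 - 1))) *
          (1 + α * (s + 1)) ^ (-q)| +
        |χ * s * (s + 1) ^ (q - 1) * (α * -q * (1 + α * (s + 1)) ^ (-q - 1))| :=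
        abs_add_le _ _
    _ ≤ (χ * (s + 1) ^ (q - 1) + χ * s * (|q - 1| * (s + 1) ^ (q - 1 - 1))) *
          (1 + α * (s + 1)) ^ (-q) +
        χ * s * (s + 1) ^ (q - 1) * (|q| * (1 + α * (s + 1)) ^ (-q - 1) * α) := by
        have h1 : |(χ * 1 * (s + 1) ^ (q - 1) + χ * s * ((q - 1) * (s + 1) ^ (q - 1 - 1))) *
            (1 + α * (s + 1)) ^ (-q)|
            ≤ (χ * (s + 1) ^ (q - 1) + χ * s * (|q - 1| * (s + 1) ^ (q - 1 - 1))) *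
            (1 + α * (s + 1)) ^ (-q) := by
          rw [abs_mul, abs_of_nonneg hBqpos]
          gcongr
          refine (abs_add_le _ _).trans ?_
          have e1 : |χ * 1 * (s + 1) ^ (q - 1)| = χ * (s + 1) ^ (q - 1) := by
            rw [abs_of_nonneg (by positivity)]; ring
          have e2 : |χ * s * ((q - 1) * (s + 1) ^ (q - 1 - 1))|
              = χ * s * (|q - 1| * (s + 1) ^ (q - 1 - 1)) := by
            rw [abs_mul, abs_mul, abs_mul, abs_of_nonneg hχ.le,
              abs_of_nonneg hs, abs_of_nonneg hapos2.le]
          rw [e1, e2]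
        have h2 : |χ * s * (s + 1) ^ (q - 1) * (α * -q * (1 + α * (s + 1)) ^ (-q - 1))|
            = χ * s * (s + 1) ^ (q - 1) * (|q| * (1 + α * (s + 1)) ^ (-q - 1) * α) := by
          rw [abs_mul, abs_mul, abs_mul, abs_mul, abs_mul, abs_neg, abs_of_nonneg hχ.le,
            abs_of_nonneg hs, abs_of_nonneg hapos.le, abs_of_nonneg hα0.le,
            abs_of_nonneg (Real.rpow_pos_of_pos hB0 _).le]
          ring
        rw [h2]
        exact add_le_add h1 le_rfl
    _ ≤ (χ * (s + 1) ^ (q - 1) + χ * s * (|q - 1| * (s + 1) ^ (q - 1 - 1))) *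
          (M * (s + 1) ^ (-q)) +
        χ * s * (s + 1) ^ (q - 1) * (|q| * (M * (s + 1) ^ (-q)) * α) := by
        gcongr <;> positivity
    _ = χ * M * ((s + 1) ^ (q - 1) * (s + 1) ^ (-q)) +
        χ * |q - 1| * M * (s * ((s + 1) ^ (q - 1 - 1) * (s + 1) ^ (-q))) +
        χ * |q| * α * M * (s * ((s + 1) ^ (q - 1) * (s + 1) ^ (-q))) := by ring
    _ ≤ χ * M * 1 + χ * |q - 1| * M * 1 + χ * |q| * α * M * 1 := by
        gcongr <;> positivity
    _ = χ * (1 + |q - 1| + |q| * α) * M := by ring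
end
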